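/- For every special type-D partition e of size 2n (n ≥ 0), the C-collapse of (e^+)^- is a metaplectic special partition of size 2n (i.e. a type-C partition whose transpose is of type D). In particular the map d̃_SP(e) := C-collapse of (e^+)^- is a well-defined map from the set of special type-D partitions of size 2n to the set of metaplectic special partitions of size 2n. -/

import Mathlib

/-!
Partitions (Young diagrams) are represented as antitone, eventually-zero
functions `f : ℕ → ℕ`, where `f i` is the length of the `(i+1)`-st row.
-/

/-- `f : ℕ → ℕ` represents a partition (Young diagram). -/
def IsPartition (f : ℕ → ℕ) : Prop :=
  Antitone f ∧ ∃ N, ∀ i, N ≤ i → f i = 0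

/-- The size of a partition: the sum of its parts. -/
noncomputable def size (f : ℕ → ℕ) : ℕ := ∑' i, f i

/-- The sum of the `k` largest parts of a partition. -/
def psum (f : ℕ → ℕ) (k : ℕ) : ℕ := ∑ i ∈ Finset.range k, f i

/-- The multiplicity with which `p` occurs as a part. -/
noncomputable def mult (f : ℕ → ℕ) (p : ℕ) : ℕ := {i | f i = p}.ncard

/-- The transpose (conjugate) partition: `transpose f i` is the length of the
`(i+1)`-st column of `f`. -/
noncomputable def transpose (f : ℕ → ℕ) : ℕ → ℕ := fun i => {j | i < f j}.ncard

/-- The number of parts of a partition (the length of its first column). -/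
noncomputable def numParts (f : ℕ → ℕ) : ℕ := {j | 0 < f j}.ncard

/-- Type B: odd size, and every (positive) even part occurs with even multiplicity. -/
def IsTypeB (f : ℕ → ℕ) : Prop :=
  IsPartition f ∧ Odd (size f) ∧ ∀ p, 0 < p → Even p → Even (mult f p)

/-- Type C: even size, and every odd part occurs with even multiplicity. -/
def IsTypeC (f : ℕ → ℕ) : Prop :=
  IsPartition f ∧ Even (size f) ∧ ∀ p, Odd p → Even (mult f p)

/-- Type D: even size, and every (positive) even part occurs with even multiplicity. -/
def IsTypeD (f : ℕ → ℕ) : Prop :=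
  IsPartition f ∧ Even (size f) ∧ ∀ p, 0 < p → Even p → Even (mult f p)

/-- Dominance order `f ≼ g` between partitions of the same size. -/
def Dom (f g : ℕ → ℕ) : Prop :=
  size f = size g ∧ ∀ k, psum f k ≤ psum g k

/-- `c` is the X-collapse of `d`, where predicate `T` expresses "type X": `c` is
the greatest type-X partition of the same size dominated by `d`. -/
def IsCollapse (T : (ℕ → ℕ) → Prop) (d c : ℕ → ℕ) : Prop :=
  T c ∧ Dom c d ∧ ∀ e, T e → Dom e d → Dom e c

open Classical in
/-- The X-collapse of `d` (junk value if it does not exist). -/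
noncomputable def collapse (T : (ℕ → ℕ) → Prop) (d : ℕ → ℕ) : ℕ → ℕ :=
  if h : ∃ c, IsCollapse T d c then h.choose else fun _ => 0

/-- The B-collapse. -/
noncomputable def collapseB : (ℕ → ℕ) → ℕ → ℕ := collapse IsTypeB

/-- The C-collapse. -/
noncomputable def collapseC : (ℕ → ℕ) → ℕ → ℕ := collapse IsTypeC

/-- The D-collapse. -/
noncomputable def collapseD : (ℕ → ℕ) → ℕ → ℕ := collapse IsTypeD

/-- `d⁺`: add one box to the first row. -/
def boxPlus (f : ℕ → ℕ) : ℕ → ℕ := fun i => if i = 0 then f 0 + 1 else f i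

/-- `d⁻`: remove one box from the last row (for nonempty `d`). -/
noncomputable def boxMinus (f : ℕ → ℕ) : ℕ → ℕ :=
  fun i => if i = numParts f - 1 then f i - 1 else f i

/-- `∇(d)`: remove the first column (every part decreased by 1). -/
def delCol (f : ℕ → ℕ) : ℕ → ℕ := fun i => f i - 1

/-- `∇̌(d)`: remove the first row (delete one largest part). -/
def delRow (f : ℕ → ℕ) : ℕ → ℕ := fun i => f (i + 1)

/-- The metaplectic Lusztig–Spaltenstein map: the D-collapse of the transpose. -/
noncomputable def mLS (d : ℕ → ℕ) : ℕ → ℕ := collapseD (transpose d)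

/-- The map `d̃_SP`: the C-collapse of `(e⁺)⁻`. -/
noncomputable def mSP (e : ℕ → ℕ) : ℕ → ℕ := collapseC (boxMinus (boxPlus e))

/-- The metaplectic Barbasch–Vogan duality. -/
noncomputable def mBV (d : ℕ → ℕ) : ℕ → ℕ := mSP (mLS d)

/-!
The C-collapse `c` of `d = (e⁺)⁻` is reached from `d` by repeatedly moving one box from the last
row of length `q` down to the first row of length `< q - 1`, where `q` is the largest odd part of
odd multiplicity. Each move lowers by one exactly the partial sums over a run of rows on which
they are odd, so every partial sum of `c` equals that of `d` or is one less than an odd one.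

The transpose of `c` is of type D as soon as the partial sums of `c` over an odd number of rows
are even. If one of them were odd, it would agree with the partial sum of `d`. A type-C partition
dominated by `d` and touching it at an odd partial sum cannot drop a part there, which forces `d`
to be flat there and the two to agree one row earlier. As `e` is special, its partial sums over
an even number of rows are even, so the touching propagates two rows at a time towards the
first row, where `d 0 = e 0 + 1 > d 1` forbids it.
-/

section PartialSums

variable (f : ℕ → ℕ)

lemma psum_zero : psum f 0 = 0 := Finset.sum_range_zero f

lemma psum_succ (k : ℕ) : psum f (k + 1) = psum f k + f k := Finset.sum_range_succ f k

variable {f}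

lemma size_eq_psum {N : ℕ} (h : ∀ i, N ≤ i → f i = 0) : size f = psum f N :=
  tsum_eq_sum fun i hi => h i (not_lt.1 fun hlt => hi (Finset.mem_range.2 hlt))

lemma eq_of_psum_eq {g : ℕ → ℕ} (h : ∀ k, psum f k = psum g k) : f = g := by
  funext i
  have := h (i + 1)
  rw [psum_succ, psum_succ, h i] at this
  omega

end PartialSums

section Transpose

variable {f : ℕ → ℕ}

lemma numParts_eq_transpose (f : ℕ → ℕ) : numParts f = transpose f 0 := rfl

lemma IsPartition.lt_transpose_iff (hf : IsPartition f) {i j : ℕ} :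
    j < transpose f i ↔ i < f j := by
  obtain ⟨hanti, N, h0⟩ := hf
  have hlower : IsLowerSet {j | i < f j} := fun a b hba ha => lt_of_lt_of_le ha (hanti hba)
  have hfin : {j | i < f j}.Finite := (Set.finite_Iio N).subset fun j hj => by
    by_contra hjN
    exact Nat.not_lt_zero i (h0 j (not_lt.1 hjN) ▸ hj)
  obtain h | ⟨a, h⟩ := hlower.eq_univ_or_Iio
  · exact absurd (h ▸ hfin) Set.infinite_univ
  · have ha : transpose f i = a := by
      rw [transpose, h, ← Finset.coe_range, Set.ncard_coe_finset, Finset.card_range]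
    rw [ha, ← Set.mem_Iio, ← h]
    rfl

lemma pos_iff_lt_numParts (hf : IsPartition f) (i : ℕ) : 0 < f i ↔ i < numParts f :=
  hf.lt_transpose_iff.symm

lemma IsPartition.transpose_eq_zero (hf : IsPartition f) {i : ℕ} (hi : f 0 ≤ i) :
    transpose f i = 0 := by
  by_contra! h
  exact absurd (hf.lt_transpose_iff.1 (Nat.pos_of_ne_zero h)) (not_lt.2 hi)

lemma isPartition_transpose (hf : IsPartition f) : IsPartition (transpose f) := by
  refine ⟨fun i i' hii' => ?_, f 0, fun i => hf.transpose_eq_zero⟩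
  by_contra! h
  exact lt_irrefl _ (hf.lt_transpose_iff.2 (hii'.trans_lt (hf.lt_transpose_iff.1 h)))

lemma IsPartition.transpose_transpose (hf : IsPartition f) : transpose (transpose f) = f := by
  funext i
  have h : {j | i < transpose f j} = Set.Iio (f i) := Set.ext fun _ => hf.lt_transpose_iff
  rw [transpose, h, ← Finset.coe_range, Set.ncard_coe_finset, Finset.card_range]

lemma IsPartition.mult_succ (hf : IsPartition f) (p : ℕ) :
    mult f (p + 1) = transpose f p - transpose f (p + 1) := by
  have h : {i | f i = p + 1} = Set.Ico (transpose f (p + 1)) (transpose f p) := by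
    ext i
    rw [Set.mem_Ico, ← not_lt, hf.lt_transpose_iff, hf.lt_transpose_iff]
    change f i = p + 1 ↔ _
    omega
  rw [mult, h, ← Finset.coe_Ico, Set.ncard_coe_finset, Nat.card_Ico]

lemma IsPartition.mult_transpose_succ (hf : IsPartition f) (p : ℕ) :
    mult (transpose f) (p + 1) = f p - f (p + 1) := by
  rw [(isPartition_transpose hf).mult_succ, hf.transpose_transpose]

lemma IsPartition.size_transpose (hf : IsPartition f) : size (transpose f) = size f := by
  obtain ⟨N, h0⟩ := hf.2
  have hcol : ∀ i, transpose f i = ((Finset.range N).filter (i < f ·)).card := by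
    intro i
    rw [transpose, ← Set.ncard_coe_finset]
    congr 1
    ext j
    simp only [Finset.coe_filter, Finset.mem_range, Set.mem_ofPred_eq, iff_and_self]
    intro hj
    by_contra! hjN
    simp [h0 j hjN] at hj
  rw [size_eq_psum h0, size_eq_psum fun i => hf.transpose_eq_zero]
  calc psum (transpose f) (f 0)
      = ∑ i ∈ Finset.range (f 0), ∑ j ∈ Finset.range N, if i < f j then 1 else 0 := by
        simp only [psum, hcol, Finset.card_filter]
    _ = ∑ j ∈ Finset.range N, ((Finset.range (f 0)).filter (· < f j)).card := by
        rw [Finset.sum_comm]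
        simp only [Finset.card_filter]
    _ = psum f N := Finset.sum_congr rfl fun j _ => by
        have hj : f j ≤ f 0 := hf.1 (Nat.zero_le j)
        have hrow : (Finset.range (f 0)).filter (· < f j) = Finset.range (f j) := by
          ext i
          simp only [Finset.mem_filter, Finset.mem_range]
          omega
        rw [hrow, Finset.card_range]

lemma IsPartition.psum_eq_size (hf : IsPartition f) {j : ℕ} (hj : numParts f ≤ j) :
    psum f j = size f := by
  refine (size_eq_psum fun i hi => ?_).symm
  by_contra! h
  have := (pos_iff_lt_numParts hf i).1 (Nat.pos_of_ne_zero h)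
  omega

lemma IsPartition.numParts_le_size (hf : IsPartition f) : numParts f ≤ size f := by
  rw [← hf.psum_eq_size le_rfl]
  calc numParts f = ∑ _j ∈ Finset.range (numParts f), 1 := by simp
    _ ≤ psum f (numParts f) :=
      Finset.sum_le_sum fun j hj => (pos_iff_lt_numParts hf j).2 (Finset.mem_range.1 hj)

end Transpose

section Parity

variable {f : ℕ → ℕ}

lemma IsPartition.psum_transpose_eq_sum (hf : IsPartition f) (q : ℕ) :
    psum f (transpose f q) = ∑ v ∈ (Finset.range (transpose f q)).image f, mult f v * v := by
  classical
  have hfiber : ∀ v ∈ (Finset.range (transpose f q)).image f,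
      mult f v = ((Finset.range (transpose f q)).filter (f · = v)).card := by
    intro v hv
    obtain ⟨i₀, hi₀, rfl⟩ := Finset.mem_image.1 hv
    have hq : q < f i₀ := hf.lt_transpose_iff.1 (Finset.mem_range.1 hi₀)
    rw [mult, ← Set.ncard_coe_finset]
    congr 1
    ext i
    simp only [Finset.coe_filter, Finset.mem_range, Set.mem_ofPred_eq]
    exact ⟨fun h => ⟨hf.lt_transpose_iff.2 (h ▸ hq), h⟩, And.right⟩
  rw [psum, Finset.sum_comp (fun v => v) f]
  exact Finset.sum_congr rfl fun v hv => by rw [hfiber v hv, smul_eq_mul]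

lemma IsTypeC.even_psum_transpose (hf : IsTypeC f) (q : ℕ) : Even (psum f (transpose f q)) := by
  rw [hf.1.psum_transpose_eq_sum]
  refine Finset.even_sum _ fun v _ => ?_
  rcases Nat.even_or_odd v with hv | hv
  · exact hv.mul_left _
  · exact (hf.2.2 v hv).mul_right _

lemma IsTypeC.even_psum_succ_of_lt (hf : IsTypeC f) {k : ℕ} (hk : f (k + 1) < f k) :
    Even (psum f (k + 1)) := by
  have hk' : transpose f (f (k + 1)) = k + 1 := eq_of_forall_lt_iff fun j => by
    rw [hf.1.lt_transpose_iff]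
    constructor
    · intro h
      by_contra! hj
      exact absurd (hf.1.1 hj) (not_le.2 h)
    · intro hj
      exact hk.trans_le (hf.1.1 (Nat.le_of_lt_succ hj))
  rw [← hk']
  exact hf.even_psum_transpose _

lemma IsPartition.odd_psum_transpose (hf : IsPartition f) {q : ℕ} (hq : Odd (q + 1))
    (hmq : Odd (mult f (q + 1))) (hmax : ∀ p, q + 1 < p → Odd p → Even (mult f p)) :
    Odd (psum f (transpose f q)) := by
  classical
  rw [hf.psum_transpose_eq_sum]
  have hmem : q + 1 ∈ (Finset.range (transpose f q)).image f := by
    obtain ⟨i, hi⟩ : ∃ i, f i = q + 1 := by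
      by_contra! h
      simp [mult, h] at hmq
    exact Finset.mem_image.2 ⟨i, Finset.mem_range.2 (hf.lt_transpose_iff.2 (by omega)), hi⟩
  rw [← Finset.add_sum_erase _ _ hmem]
  refine (hmq.mul hq).add_even (Finset.even_sum _ fun v hv => ?_)
  obtain ⟨hvq, hv⟩ := Finset.mem_erase.1 hv
  obtain ⟨i, hi, rfl⟩ := Finset.mem_image.1 hv
  have : q < f i := hf.lt_transpose_iff.1 (Finset.mem_range.1 hi)
  rcases Nat.even_or_odd (f i) with h | h
  · exact h.mul_left _
  · exact (hmax _ (by omega) h).mul_right _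

end Parity

section Touching

variable {g d : ℕ → ℕ}

lemma IsTypeC.psum_eq_of_psum_succ_eq (hg : IsTypeC g) (hd : Antitone d)
    (hdom : ∀ j, psum g j ≤ psum d j) {i : ℕ} (heq : psum g (i + 1) = psum d (i + 1))
    (hodd : Odd (psum g (i + 1))) : d i = d (i + 1) ∧ g i = d i ∧ psum g i = psum d i := by
  have hflat : g (i + 1) = g i := by
    by_contra h
    have hlt : g (i + 1) < g i := lt_of_le_of_ne (hg.1.1 (Nat.le_succ i)) h
    exact Nat.not_even_iff_odd.2 hodd (hg.even_psum_succ_of_lt hlt)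
  have hprev := hdom i
  have hnext := hdom (i + 1 + 1)
  have hdi := hd (Nat.le_add_right i 1)
  simp only [psum_succ] at heq hnext
  omega

lemma IsTypeC.psum_lt_of_odd (hg : IsTypeC g) (hd : Antitone d)
    (hdom : ∀ j, psum g j ≤ psum d j) {a b : ℕ} (hdrop : d (a + 1) < d a)
    (hodd : ∀ j, a < j → j ≤ b → Odd (psum d j)) :
    ∀ j, a < j → j ≤ b → psum g j < psum d j := by
  intro j
  induction j with
  | zero => omega
  | succ j ih =>
    intro haj hjb
    refine lt_of_le_of_ne (hdom _) fun heq => ?_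
    obtain ⟨hflat, -, hprev⟩ :=
      hg.psum_eq_of_psum_succ_eq hd hdom heq (heq ▸ hodd _ haj hjb)
    rcases Nat.lt_or_ge a j with h | h
    · exact (ih h (by omega)).ne hprev
    · obtain rfl : j = a := by omega
      omega

lemma IsTypeC.odd_psum_of_psum_add_two_eq (hg : IsTypeC g) (hd : Antitone d)
    (hdom : ∀ j, psum g j ≤ psum d j) {i : ℕ} (heq : psum g (i + 1 + 1) = psum d (i + 1 + 1))
    (hodd : Odd (psum g (i + 1 + 1))) (hodd' : Odd (psum d (i + 1))) : Odd (psum g i) := by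
  obtain ⟨-, hg₁, heq₁⟩ := hg.psum_eq_of_psum_succ_eq hd hdom heq hodd
  obtain ⟨hflat, hg₀, -⟩ := hg.psum_eq_of_psum_succ_eq hd hdom heq₁ (heq₁ ▸ hodd')
  rw [psum_succ, psum_succ, hg₁, hg₀, hflat, add_assoc] at hodd
  exact (Nat.odd_add.1 hodd).2 (Even.add_self _)

end Touching

def IsOddTrim (d c : ℕ → ℕ) : Prop :=
  ∀ j, psum c j = psum d j ∨ (psum c j + 1 = psum d j ∧ Odd (psum d j))

namespace IsOddTrim

variable {d d' c : ℕ → ℕ}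

lemma refl (d : ℕ → ℕ) : IsOddTrim d d := fun _ => Or.inl rfl

lemma psum_le (h : IsOddTrim d c) (j : ℕ) : psum c j ≤ psum d j := by
  rcases h j with h | h <;> omega

lemma psum_eq_of_odd (h : IsOddTrim d c) {j : ℕ} (hodd : Odd (psum c j)) :
    psum c j = psum d j := by
  rcases h j with h | ⟨h, hodd'⟩
  · exact h
  · rw [← h, Nat.odd_add_one] at hodd'
    exact absurd hodd hodd'

lemma trans (h₁ : IsOddTrim d d') (h₂ : IsOddTrim d' c) : IsOddTrim d c := by
  intro j
  rcases h₁ j with h₁ | ⟨h₁, hodd⟩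
  · exact h₁ ▸ h₂ j
  · rcases h₂ j with h₂ | ⟨-, hodd'⟩
    · exact Or.inr ⟨h₂ ▸ h₁, hodd⟩
    · rw [← h₁, Nat.odd_add_one] at hodd
      exact absurd hodd' hodd

end IsOddTrim

section MoveBox

def moveBox (f : ℕ → ℕ) (a b : ℕ) : ℕ → ℕ :=
  fun i => if i = a then f i - 1 else if i = b then f i + 1 else f i

variable {f : ℕ → ℕ} {a b : ℕ}

lemma psum_moveBox (hab : a < b) (ha : 1 ≤ f a) (j : ℕ) :
    psum (moveBox f a b) j + (if a < j then 1 else 0) = psum f j + (if b < j then 1 else 0) := by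
  induction j with
  | zero => simp [psum_zero]
  | succ j ih =>
    simp only [psum_succ, moveBox]
    split_ifs at ih ⊢ <;> subst_vars <;> omega

lemma isPartition_moveBox (hf : IsPartition f) (hab : a < b) (ha : f (a + 1) < f a)
    (hb : f b < f (b - 1)) (hab' : f b + 2 ≤ f a) : IsPartition (moveBox f a b) := by
  obtain ⟨hanti, N, h0⟩ := hf
  refine ⟨antitone_nat_of_succ_le fun i => ?_, max N (b + 1), fun i hi => ?_⟩
  · have hi := hanti (Nat.le_add_right i 1)
    simp only [moveBox]
    split_ifs <;> subst_vars <;> (try simp only [Nat.add_sub_cancel] at hb) <;> omega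
  · have := h0 i (le_of_max_le_left hi)
    simp only [moveBox]
    split_ifs <;> omega

lemma IsPartition.size_moveBox (hf : IsPartition f) (hab : a < b) (ha : 1 ≤ f a) :
    size (moveBox f a b) = size f := by
  obtain ⟨N, h0⟩ := hf.2
  have h := psum_moveBox hab ha (max N (b + 1))
  rw [size_eq_psum (N := max N (b + 1)) fun i hi => ?_,
    size_eq_psum (N := max N (b + 1)) fun i hi => h0 i (le_of_max_le_left hi)]
  · split_ifs at h <;> omega
  · have := h0 i (le_of_max_le_left hi)
    simp only [moveBox]
    split_ifs <;> omega

lemma isOddTrim_moveBox (hab : a < b) (ha : 1 ≤ f a)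
    (hodd : ∀ j, a < j → j ≤ b → Odd (psum f j)) : IsOddTrim f (moveBox f a b) := by
  intro j
  have := psum_moveBox hab ha j
  by_cases h : a < j ∧ j ≤ b
  · exact Or.inr ⟨by split_ifs at this <;> omega, hodd j h.1 h.2⟩
  · exact Or.inl (by split_ifs at this <;> omega)

lemma IsTypeC.psum_le_moveBox {g : ℕ → ℕ} (hg : IsTypeC g) (hf : Antitone f)
    (hdom : ∀ j, psum g j ≤ psum f j) (hab : a < b) (ha : f (a + 1) < f a)
    (hodd : ∀ j, a < j → j ≤ b → Odd (psum f j)) (j : ℕ) :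
    psum g j ≤ psum (moveBox f a b) j := by
  have := psum_moveBox hab (by omega : 1 ≤ f a) j
  have := hdom j
  by_cases h : a < j ∧ j ≤ b
  · have := hg.psum_lt_of_odd hf hdom ha hodd j h.1 h.2
    split_ifs at * <;> omega
  · split_ifs at * <;> omega

end MoveBox

section Collapse

variable {d : ℕ → ℕ}

lemma IsPartition.exists_max_odd_mult (hd : IsPartition d) (heven : Even (size d))
    (hC : ¬IsTypeC d) :
    ∃ w, Odd (mult d (2 * w + 3)) ∧ ∀ p, 2 * w + 3 < p → Odd p → Even (mult d p) := by
  set S := {p | Odd p ∧ Odd (mult d p)}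
  have hne : S.Nonempty := by
    by_contra hS
    refine hC ⟨hd, heven, fun p hp => ?_⟩
    by_contra hm
    exact hS ⟨p, hp, Nat.not_even_iff_odd.1 hm⟩
  have hbdd : BddAbove S := ⟨d 0, fun p ⟨_, hm⟩ => by
    by_contra! hp
    have hempty : {i | d i = p} = ∅ :=
      Set.eq_empty_of_forall_notMem fun i hi => absurd (hd.1 (Nat.zero_le i)) (by
        change d i = p at hi
        omega)
    simp [mult, hempty] at hm⟩
  obtain ⟨⟨u, hu⟩, hmq⟩ := Nat.sSup_mem hne hbdd
  have hmax : ∀ p, sSup S < p → Odd p → Even (mult d p) := fun p hp hodd => by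
    by_contra hm
    exact not_le.2 hp (le_csSup hbdd ⟨hodd, Nat.not_even_iff_odd.1 hm⟩)
  rcases u with _ | w
  · -- the largest odd part of odd multiplicity cannot be `1`, as the size is even
    have hodd := hd.odd_psum_transpose (q := 0) (by decide) (by simpa [hu] using hmq)
      (fun p hp => hmax p (by omega))
    rw [← numParts_eq_transpose, hd.psum_eq_size le_rfl] at hodd
    exact absurd heven (Nat.not_even_iff_odd.2 hodd)
  · refine ⟨w, by rwa [hu] at hmq, fun p hp => hmax p (by omega)⟩

lemma IsPartition.exists_odd_block (hd : IsPartition d) (heven : Even (size d))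
    (hC : ¬IsTypeC d) :
    ∃ a m, a < m ∧ d (a + 1) < d a ∧ d m < d (m - 1) ∧ d m + 2 ≤ d a ∧
      ∀ j, a < j → j ≤ m → Odd (psum d j) := by
  obtain ⟨w, hmq, hmax⟩ := hd.exists_max_odd_mult heven hC
  -- with `q = 2w + 3`: rows `≤ a` have length `≥ q`, rows `< m` have length `≥ q - 1`
  set m := transpose d (2 * w + 1)
  have hm : ∀ i, i < m ↔ 2 * w + 1 < d i := fun i => hd.lt_transpose_iff
  have hmult : mult d (2 * w + 3) = transpose d (2 * w + 2) - transpose d (2 * w + 3) :=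
    hd.mult_succ _
  have hpos := hmq.pos
  obtain ⟨a, hka⟩ : ∃ a, transpose d (2 * w + 2) = a + 1 :=
    Nat.exists_eq_add_one.2 (by omega)
  have hk : ∀ i, i ≤ a ↔ 2 * w + 2 < d i := fun i => by
    rw [← Nat.lt_add_one_iff, ← hka, hd.lt_transpose_iff]
  have hda : d a = 2 * w + 3 := by
    have h3 : ¬a < transpose d (2 * w + 3) := by omega
    rw [hd.lt_transpose_iff] at h3
    have := (hk a).1 le_rfl
    omega
  have ham : a < m := (hm a).2 (by omega)
  have hdm := (hm m).not.1 (lt_irrefl m)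
  have hdm' := (hm (m - 1)).1 (by omega)
  refine ⟨a, m, ham, ?_, by omega, by omega, fun j haj hjm => ?_⟩
  · have := (hk (a + 1)).not.1 (by omega)
    omega
  induction j with
  | zero => omega
  | succ j ih =>
    rcases Nat.lt_or_ge a j with h | h
    · have hdj : d j = 2 * w + 2 := by
        have := (hk j).not.1 (by omega)
        have := (hm j).1 (by omega)
        omega
      rw [psum_succ, hdj]
      exact (ih h (by omega)).add_even (even_two_mul (w + 1))
    · obtain rfl : j = a := by omega
      rw [← hka]
      exact hd.odd_psum_transpose ⟨w + 1, by ring⟩ hmq hmax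

lemma IsPartition.exists_isOddTrim_step (hd : IsPartition d) (heven : Even (size d))
    (hC : ¬IsTypeC d) :
    ∃ d', IsPartition d' ∧ size d' = size d ∧ IsOddTrim d d' ∧ (∃ j, psum d' j < psum d j) ∧
      ∀ g, IsTypeC g → Dom g d → Dom g d' := by
  obtain ⟨a, m, ham, hdrop, hm, hgap, hodd⟩ := hd.exists_odd_block heven hC
  have hsize := hd.size_moveBox ham (by omega)
  refine ⟨moveBox d a m, isPartition_moveBox hd ham hdrop hm hgap, hsize,
    isOddTrim_moveBox ham (by omega) hodd, ⟨a + 1, ?_⟩,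
    fun g hg hgd => ⟨hgd.1.trans hsize.symm, hg.psum_le_moveBox hd.1 hgd.2 ham hdrop hodd⟩⟩
  have := psum_moveBox ham (by omega : 1 ≤ d a) (a + 1)
  split_ifs at this <;> omega

theorem IsPartition.exists_isCollapse_isOddTrim (hd : IsPartition d) (heven : Even (size d)) :
    ∃ c, IsCollapse IsTypeC d c ∧ IsOddTrim d c := by
  induction hμ : ∑ j ∈ Finset.range (size d), psum d j using Nat.strong_induction_on
    generalizing d with
  | _ μ ih =>
  by_cases hC : IsTypeC d
  · exact ⟨d, ⟨hC, ⟨rfl, fun _ => le_rfl⟩, fun _ _ h => h⟩, IsOddTrim.refl d⟩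
  obtain ⟨d', hd', hsize, htrim, ⟨j₀, hj₀⟩, hdom⟩ := hd.exists_isOddTrim_step heven hC
  have hj₀size : j₀ < size d := by
    by_contra! h
    rw [hd.psum_eq_size (hd.numParts_le_size.trans h),
      hd'.psum_eq_size (hd'.numParts_le_size.trans (hsize ▸ h)), hsize] at hj₀
    exact lt_irrefl _ hj₀
  have hlt : ∑ j ∈ Finset.range (size d'), psum d' j < μ := by
    rw [hsize, ← hμ]
    exact Finset.sum_lt_sum (fun j _ => htrim.psum_le j) ⟨j₀, Finset.mem_range.2 hj₀size, hj₀⟩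
  obtain ⟨c, ⟨hcC, hcd', hmax⟩, htrim'⟩ := ih _ hlt hd' (hsize ▸ heven) rfl
  exact ⟨c, ⟨hcC, ⟨hcd'.1.trans hsize, fun j => (hcd'.2 j).trans (htrim.psum_le j)⟩,
    fun g hg hgd => hmax g hg (hdom g hg hgd)⟩, htrim.trans htrim'⟩

lemma IsCollapse.eq {T : (ℕ → ℕ) → Prop} {c₁ c₂ : ℕ → ℕ} (h₁ : IsCollapse T d c₁)
    (h₂ : IsCollapse T d c₂) : c₁ = c₂ :=
  eq_of_psum_eq fun k => le_antisymm ((h₂.2.2 c₁ h₁.1 h₁.2.1).2 k) ((h₁.2.2 c₂ h₂.1 h₂.2.1).2 k)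

lemma IsCollapse.collapse_eq {T : (ℕ → ℕ) → Prop} {c : ℕ → ℕ} (h : IsCollapse T d c) :
    collapse T d = c := by
  rw [collapse, dif_pos ⟨c, h⟩]
  exact (Exists.choose_spec (⟨c, h⟩ : ∃ c', IsCollapse T d c')).eq h

end Collapse

section BoxPlusMinus

variable {f : ℕ → ℕ}

lemma isPartition_boxPlus (hf : IsPartition f) : IsPartition (boxPlus f) := by
  obtain ⟨hanti, N, h0⟩ := hf
  refine ⟨antitone_nat_of_succ_le fun i => ?_, N + 1, fun i hi => ?_⟩
  · rcases i with _ | i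
    · simpa [boxPlus] using (hanti (Nat.zero_le 1)).trans (Nat.le_succ _)
    · simpa [boxPlus] using hanti (Nat.le_succ (i + 1))
  · simp only [boxPlus, if_neg (show i ≠ 0 by omega)]
    exact h0 i (by omega)

lemma psum_boxPlus (f : ℕ → ℕ) (j : ℕ) : psum (boxPlus f) (j + 1) = psum f (j + 1) + 1 := by
  induction j with
  | zero => simp [psum_succ, psum_zero, boxPlus]
  | succ j ih =>
    rw [psum_succ, ih, psum_succ f (j + 1)]
    simp only [boxPlus, if_neg (Nat.succ_ne_zero j)]
    ring

lemma le_boxPlus (f : ℕ → ℕ) (i : ℕ) : f i ≤ boxPlus f i := by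
  unfold boxPlus
  split_ifs <;> subst_vars <;> omega

lemma boxMinus_le (f : ℕ → ℕ) (i : ℕ) : boxMinus f i ≤ f i := by
  unfold boxMinus
  split_ifs <;> omega

lemma isPartition_boxMinus (hf : IsPartition f) : IsPartition (boxMinus f) := by
  obtain ⟨N, h0⟩ := hf.2
  refine ⟨antitone_nat_of_succ_le fun i => ?_, N, fun i hi => ?_⟩
  · have := hf.1 (Nat.le_add_right i 1)
    have := pos_iff_lt_numParts hf i
    have := pos_iff_lt_numParts hf (i + 1)
    unfold boxMinus
    split_ifs <;> omega
  · exact Nat.eq_zero_of_le_zero ((boxMinus_le f i).trans (h0 i hi).le)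

lemma IsPartition.psum_boxMinus (hf : IsPartition f) (hs : 1 ≤ numParts f) (j : ℕ) :
    psum (boxMinus f) j + (if numParts f ≤ j then 1 else 0) = psum f j := by
  have hlast := (pos_iff_lt_numParts hf (numParts f - 1)).2 (by omega)
  induction j with
  | zero => rw [psum_zero, psum_zero, if_neg (by omega)]
  | succ j ih =>
    simp only [psum_succ, boxMinus]
    split_ifs at ih ⊢ <;> subst_vars <;> omega

lemma IsPartition.numParts_le_numParts_boxPlus (hf : IsPartition f) :
    numParts f ≤ numParts (boxPlus f) := by
  by_contra! h
  have := (pos_iff_lt_numParts hf _).2 h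
  have := (pos_iff_lt_numParts (isPartition_boxPlus hf) _).1 (this.trans_le (le_boxPlus f _))
  omega

lemma IsPartition.psum_boxMinus_boxPlus (hf : IsPartition f) (j : ℕ) :
    psum (boxMinus (boxPlus f)) (j + 1) + (if numParts (boxPlus f) ≤ j + 1 then 1 else 0) =
      psum f (j + 1) + 1 := by
  have hs := (pos_iff_lt_numParts (isPartition_boxPlus hf) 0).1 (by simp [boxPlus])
  rw [(isPartition_boxPlus hf).psum_boxMinus hs, psum_boxPlus]

lemma IsPartition.psum_boxMinus_boxPlus_of_le (hf : IsPartition f) {j : ℕ}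
    (hj : numParts (boxPlus f) ≤ j + 1) : psum (boxMinus (boxPlus f)) (j + 1) = size f := by
  have := hf.psum_boxMinus_boxPlus j
  rw [if_pos hj, hf.psum_eq_size (hf.numParts_le_numParts_boxPlus.trans hj)] at this
  omega

lemma IsPartition.size_boxMinus_boxPlus (hf : IsPartition f) :
    size (boxMinus (boxPlus f)) = size f := by
  have hd := isPartition_boxMinus (isPartition_boxPlus hf)
  set J := numParts (boxMinus (boxPlus f)) + numParts (boxPlus f)
  rw [← hd.psum_eq_size (j := J + 1) (by omega), hf.psum_boxMinus_boxPlus_of_le (by omega)]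

end BoxPlusMinus

section Special

variable {e c : ℕ → ℕ}

lemma IsPartition.even_psum_two_mul (he : IsPartition e) (hC : IsTypeC (transpose e)) (j : ℕ) :
    Even (psum e (2 * j)) := by
  induction j with
  | zero => simp [psum_zero]
  | succ j ih =>
    have hcol := hC.2.2 (2 * j + 1) (odd_two_mul_add_one j)
    rw [he.mult_transpose_succ, Nat.even_sub (he.1 (Nat.le_add_right _ 1)), ← Nat.even_add]
      at hcol
    rw [show 2 * (j + 1) = 2 * j + 1 + 1 by ring, psum_succ, psum_succ, add_assoc]
    exact ih.add hcol

lemma IsPartition.isTypeD_transpose (hc : IsPartition c) (heven : Even (size c))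
    (hodd : ∀ j, Even (psum c (2 * j + 1))) : IsTypeD (transpose c) := by
  refine ⟨isPartition_transpose hc, hc.size_transpose ▸ heven, fun p hp hpe => ?_⟩
  obtain ⟨j, rfl⟩ : ∃ j, p = 2 * j + 1 + 1 := by
    obtain ⟨x, hx⟩ := hpe
    exact ⟨x - 1, by omega⟩
  rw [hc.mult_transpose_succ, Nat.even_sub (hc.1 (Nat.le_add_right _ 1)), ← Nat.even_add]
  have hnext := hodd (j + 1)
  rw [show 2 * (j + 1) + 1 = 2 * j + 1 + 1 + 1 by ring, psum_succ, psum_succ, add_assoc] at hnext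
  exact (Nat.even_add.1 hnext).1 (hodd j)

lemma IsPartition.even_psum_odd_of_isOddTrim (he : IsPartition e) (hsize : Even (size e))
    (hC : IsTypeC (transpose e)) (hc : IsTypeC c)
    (hdom : ∀ j, psum c j ≤ psum (boxMinus (boxPlus e)) j)
    (htrim : IsOddTrim (boxMinus (boxPlus e)) c) (j : ℕ) : Even (psum c (2 * j + 1)) := by
  set d := boxMinus (boxPlus e)
  set s := numParts (boxPlus e)
  have hd : IsPartition d := isPartition_boxMinus (isPartition_boxPlus he)
  have hpsum : ∀ j, psum d (j + 1) + (if s ≤ j + 1 then 1 else 0) = psum e (j + 1) + 1 :=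
    he.psum_boxMinus_boxPlus
  have hbig : ∀ j, s ≤ j + 1 → Even (psum d (j + 1)) := fun j hj =>
    he.psum_boxMinus_boxPlus_of_le hj ▸ hsize
  induction j with
  | zero =>
    change Even (psum c (0 + 1))
    by_contra hodd
    rw [Nat.not_even_iff_odd] at hodd
    have heq := htrim.psum_eq_of_odd hodd
    by_cases h : s ≤ 1
    · exact Nat.not_even_iff_odd.2 (heq ▸ hodd) (hbig 0 h)
    · -- `d` would have to be flat at its first row, but `d 0 = e 0 + 1 > e 1 ≥ d 1`
      obtain ⟨hflat, -, -⟩ := hc.psum_eq_of_psum_succ_eq hd.1 hdom heq hodd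
      have h0 : d 0 = e 0 + 1 := by
        have := hpsum 0
        simp only [psum_succ, psum_zero, if_neg h] at this
        omega
      have h1 : d (0 + 1) ≤ e 1 := (boxMinus_le _ 1).trans (by simp [boxPlus])
      have h2 := he.1 (Nat.zero_le 1)
      omega
  | succ j ih =>
    rw [show 2 * (j + 1) + 1 = 2 * j + 1 + 1 + 1 by ring]
    by_contra hodd
    rw [Nat.not_even_iff_odd] at hodd
    have heq := htrim.psum_eq_of_odd hodd
    by_cases h : s ≤ 2 * j + 1 + 1 + 1
    · exact Nat.not_even_iff_odd.2 (heq ▸ hodd) (hbig _ h)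
    · have hodd' : Odd (psum d (2 * j + 1 + 1)) := by
        have := hpsum (2 * j + 1)
        rw [if_neg (by omega), add_zero] at this
        rw [this, show 2 * j + 1 + 1 = 2 * (j + 1) by ring]
        exact (he.even_psum_two_mul hC (j + 1)).add_one
      exact Nat.not_even_iff_odd.2 (hc.odd_psum_of_psum_add_two_eq hd.1 hdom heq hodd hodd') ih

end Special

/-- for every special type-D partition `e` of size `2n`, the
C-collapse of `(e⁺)⁻` is a metaplectic special partition of size `2n`; in
particular `d̃_SP` is well-defined from special type-D partitions of size `2n`
to metaplectic special partitions of size `2n`. -/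
theorem stmt_3 (n : ℕ) (e : ℕ → ℕ) (he : IsTypeD e) (hesp : IsTypeC (transpose e))
    (hsize : size e = 2 * n) :
    IsTypeC (mSP e) ∧ IsTypeD (transpose (mSP e)) ∧ size (mSP e) = 2 * n := by
  obtain ⟨he, -, -⟩ := he
  have heven : Even (size e) := hsize ▸ even_two_mul n
  have hd := isPartition_boxMinus (isPartition_boxPlus he)
  have hdsize := he.size_boxMinus_boxPlus
  obtain ⟨c, hcol, htrim⟩ := hd.exists_isCollapse_isOddTrim (hdsize ▸ heven)
  have hcsize : size c = 2 * n := hcol.2.1.1.trans (hdsize.trans hsize)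
  rw [mSP, collapseC, hcol.collapse_eq]
  exact ⟨hcol.1, hcol.1.1.isTypeD_transpose (hcsize ▸ even_two_mul n)
    (he.even_psum_odd_of_isOddTrim heven hesp hcol.1 hcol.2.1.2 htrim), hcsize⟩
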